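/- Let μ* ∈ H^n be non-constant with true segmentation τ* whose segments are λ*_1,…,λ*_{D_{τ*}}, and denote by μ*_{λ*_i} the common value of μ* on λ*_i. Then for any segmentation τ ∈ T_n with D_τ < D_{τ*}: ‖μ* − Π_τ μ*‖² ≥ min_{1≤i≤D_{τ*}−1} { (|λ*_i| · |λ*_{i+1}|) / (|λ*_i| + |λ*_{i+1}|) · ‖μ*_{λ*_{i+1}} − μ*_{λ*_i}‖_H² }. -/

import Mathlib

open MeasureTheory ProbabilityTheory

/-- A segmentation of `{1, …, n}` with `D` segments: integers
`0 = t 0 < t 1 < ⋯ < t D = n`. -/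
structure Seg (n : ℕ) where
  D : ℕ
  t : ℕ → ℕ
  hD : 0 < D
  h0 : t 0 = 0
  hn : t D = n
  hmono : ∀ ℓ < D, t ℓ < t (ℓ + 1)

namespace Seg

variable {n : ℕ}

/-- The `ℓ`-th segment (`0`-based) of a segmentation, as a set of `0`-based indices:
it corresponds to the paper's segment `λ_{ℓ+1} = {t ℓ + 1, …, t (ℓ+1)}` (1-based). -/
def seg (τ : Seg n) (ℓ : ℕ) : Finset (Fin n) :=
  Finset.univ.filter fun j => τ.t ℓ ≤ (j : ℕ) ∧ (j : ℕ) < τ.t (ℓ + 1)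

/-- `Λ̲_τ`: normalized size of the smallest segment. -/
noncomputable def lamMin (τ : Seg n) : ℝ :=
  (((Finset.range τ.D).inf' (Finset.nonempty_range_iff.mpr τ.hD.ne')
      fun ℓ => τ.t (ℓ + 1) - τ.t ℓ : ℕ) : ℝ) / n

/-- `Λ̄_τ`: normalized size of the largest segment. -/
noncomputable def lamMax (τ : Seg n) : ℝ :=
  (((Finset.range τ.D).sup' (Finset.nonempty_range_iff.mpr τ.hD.ne')
      fun ℓ => τ.t (ℓ + 1) - τ.t ℓ : ℕ) : ℝ) / n

/-- `d∞^{(1)}(τ¹,τ²) = max_{1 ≤ i ≤ D₁−1} min_{1 ≤ j ≤ D₂−1} |τ¹_i − τ²_j|`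
(with natural conventions in the degenerate cases where a segmentation has no
interior change-point). -/
noncomputable def dinf1 (τ1 τ2 : Seg n) : ℕ :=
  if h : 2 ≤ τ1.D ∧ 2 ≤ τ2.D then
    (Finset.Ioo 0 τ1.D).sup fun i =>
      (Finset.Ioo 0 τ2.D).inf' ⟨1, Finset.mem_Ioo.mpr ⟨Nat.one_pos, by omega⟩⟩
        fun j => Nat.dist (τ1.t i) (τ2.t j)
  else if τ1.D = τ2.D then 0 else n

/-- `d∞^{(2)}(τ¹,τ²) = max_{1 ≤ i ≤ D₁−1} min_{0 ≤ j ≤ D₂} |τ¹_i − τ²_j|`. -/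
noncomputable def dinf2 (τ1 τ2 : Seg n) : ℕ :=
  (Finset.Ioo 0 τ1.D).sup fun i =>
    (Finset.Icc 0 τ2.D).inf' ⟨0, Finset.mem_Icc.mpr ⟨le_rfl, Nat.zero_le _⟩⟩
      fun j => Nat.dist (τ1.t i) (τ2.t j)

/-- `d∞^{(3)}(τ¹,τ²) = max_{1 ≤ i ≤ D₁−1} |τ¹_i − τ²_i|` (meaningful when `D₁ = D₂`). -/
noncomputable def dinf3 (τ1 τ2 : Seg n) : ℕ :=
  (Finset.Ioo 0 τ1.D).sup fun i => Nat.dist (τ1.t i) (τ2.t i)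

/-- `d_H^{(1)}`. -/
noncomputable def dH1 (τ1 τ2 : Seg n) : ℕ := max (dinf1 τ1 τ2) (dinf1 τ2 τ1)

/-- `d_H^{(2)}`. -/
noncomputable def dH2 (τ1 τ2 : Seg n) : ℕ := max (dinf2 τ1 τ2) (dinf2 τ2 τ1)

/-- The matrix of the orthogonal projection `Π_τ`:
`(Π_τ)_{ij} = 1/|λ|` if `i, j` are in the same segment `λ` of `τ`, and `0` otherwise. -/
noncomputable def Pmat (τ : Seg n) : Fin n → Fin n → ℝ := fun i j =>
  ∑ ℓ ∈ Finset.range τ.D, if i ∈ τ.seg ℓ ∧ j ∈ τ.seg ℓ then ((τ.seg ℓ).card : ℝ)⁻¹ else 0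

/-- The Frobenius loss `d_F(τ¹,τ²) = ‖Π_{τ¹} − Π_{τ²}‖_F`. -/
noncomputable def dF (τ1 τ2 : Seg n) : ℝ :=
  Real.sqrt (∑ i, ∑ j, (Pmat τ1 i j - Pmat τ2 i j) ^ 2)

/-- The orthogonal projection `Π_τ : H^n → H^n` onto vectors constant on each segment
of `τ`: `(Π_τ x)_i` is the average of `x` over the segment of `τ` containing `i`. -/
noncomputable def proj {H : Type*} [AddCommGroup H] [Module ℝ H]
    (τ : Seg n) (x : Fin n → H) : Fin n → H := fun i =>
  ∑ ℓ ∈ Finset.range τ.D,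
    if τ.t ℓ ≤ (i : ℕ) ∧ (i : ℕ) < τ.t (ℓ + 1)
    then (((τ.t (ℓ + 1) - τ.t ℓ : ℕ) : ℝ))⁻¹ • ∑ j ∈ τ.seg ℓ, x j
    else 0

end Seg

/-- Squared norm on `H^n`: `‖x‖² = Σ_i ‖x_i‖²`. -/
noncomputable def hnorm2 {n : ℕ} {H : Type*} [NormedAddCommGroup H] (x : Fin n → H) : ℝ :=
  ∑ i, ‖x i‖ ^ 2

/-- Inner product on `H^n`: `⟨x, y⟩ = Σ_i ⟨x_i, y_i⟩_H`. -/
noncomputable def hinner {n : ℕ} {H : Type*} [NormedAddCommGroup H] [InnerProductSpace ℝ H]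
    (x y : Fin n → H) : ℝ := ∑ i, inner ℝ (x i) (y i)

/-- `τ` is the true segmentation of `m ∈ H^n`: `m` is constant on every segment of `τ`
and jumps at every interior change-point of `τ`. -/
def IsTrueSeg {n : ℕ} {H : Type*} (τ : Seg n) (m : Fin n → H) : Prop :=
  (∀ ℓ < τ.D, ∀ i ∈ τ.seg ℓ, ∀ j ∈ τ.seg ℓ, m i = m j) ∧
  ∀ ℓ, 0 < ℓ → ℓ < τ.D → ∀ (h1 : τ.t ℓ - 1 < n) (h2 : τ.t ℓ < n),
    m ⟨τ.t ℓ - 1, h1⟩ ≠ m ⟨τ.t ℓ, h2⟩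

/-- The size `‖μ*_{t ℓ + 1} − μ*_{t ℓ}‖` (paper indexing) of the jump of `m` at
the change-point `t ℓ` of `τ`. -/
noncomputable def jumpAt {n : ℕ} {H : Type*} [NormedAddCommGroup H]
    (τ : Seg n) (m : Fin n → H) (ℓ : ℕ) : ℝ :=
  if h : 0 < τ.t ℓ ∧ τ.t ℓ < n then ‖m ⟨τ.t ℓ, h.2⟩ - m ⟨τ.t ℓ - 1, by omega⟩‖ else 0

/-- `Δ̲`: size of the smallest jump of `m` (over the change-points of `τ`). -/
noncomputable def deltaMin {n : ℕ} {H : Type*} [NormedAddCommGroup H]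
    (τ : Seg n) (m : Fin n → H) : ℝ :=
  if h : 2 ≤ τ.D then
    (Finset.Ioo 0 τ.D).inf' ⟨1, Finset.mem_Ioo.mpr ⟨Nat.one_pos, by omega⟩⟩ (jumpAt τ m)
  else 0

/-- `Δ̄`: size of the largest jump of `m` (over the change-points of `τ`). -/
noncomputable def deltaMax {n : ℕ} {H : Type*} [NormedAddCommGroup H]
    (τ : Seg n) (m : Fin n → H) : ℝ :=
  if h : 2 ≤ τ.D then
    (Finset.Ioo 0 τ.D).sup' ⟨1, Finset.mem_Ioo.mpr ⟨Nat.one_pos, by omega⟩⟩ (jumpAt τ m)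
  else 0

/-- The value of `m` at the first index of the `ℓ`-th segment of `τ`; if `m` is constant
on each segment of `τ`, this is the common value `μ*_{λ_ℓ}` of `m` on that segment. -/
noncomputable def segVal {n : ℕ} {H : Type*} [AddCommGroup H]
    (τ : Seg n) (m : Fin n → H) (ℓ : ℕ) : H :=
  if h : τ.t ℓ < n then m ⟨τ.t ℓ, h⟩ else 0

/-- `M_n = max_{1 ≤ k ≤ n} ‖ε_1 + ⋯ + ε_k‖` (the value at `k = 0` is `0`, which does not
affect the maximum). -/
noncomputable def Mmax {n : ℕ} {H : Type*} [NormedAddCommGroup H] (ε : Fin n → H) : ℝ :=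
  (Finset.range (n + 1)).sup' (Finset.nonempty_range_iff.mpr (Nat.succ_ne_zero n))
    fun k => ‖∑ j ∈ Finset.univ.filter (fun j : Fin n => (j : ℕ) < k), ε j‖

/-!
Split `‖μ* − Π_τ μ*‖²` into the least-squares costs of `μ*` on the segments of `τ`, and
induct on the number of true segments, looking at the last segment `[b, n)` of `τ`. If it
contains the last two true segments whole, the least-squares cost of a two-valued block
already dominates the weight of the last jump. If it lies inside the last true segment, it can
be dropped and the problem truncated at the last true change-point. Otherwise `b` cuts the
second-to-last true segment, of length `p + u`, into pieces `p` and `u`: the induction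
hypothesis, applied with that segment shortened to `p`, controls one jump, the last segment of
`τ` controls the last jump with `u` in place of `p + u`, and the weights are recombined by the
concavity of the parallel sum `xy/(x+y)`.
-/

open Finset

noncomputable def parallelSum (u v : ℝ) : ℝ := u * v / (u + v)

lemma parallelSum_mul_sq_le {u v α β δ : ℝ} (hu : 0 < u) (hv : 0 < v) (hδ : 0 ≤ δ)
    (h : δ ≤ α + β) : parallelSum u v * δ ^ 2 ≤ u * α ^ 2 + v * β ^ 2 := by
  have hδ2 : δ ^ 2 ≤ (α + β) ^ 2 := pow_le_pow_left₀ hδ h 2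
  rw [parallelSum, div_mul_eq_mul_div, div_le_iff₀ (by positivity)]
  nlinarith [sq_nonneg (u * α - v * β), mul_le_mul_of_nonneg_left hδ2 (mul_pos hu hv).le]

lemma min_parallelSum_le {s p u q J K : ℝ} (hs : 0 ≤ s) (hp : 0 < p) (hu : 0 < u)
    (hq : 0 ≤ q) :
    min (parallelSum s (p + u) * J ^ 2) (parallelSum (p + u) q * K ^ 2)
      ≤ parallelSum s p * J ^ 2 + parallelSum u q * K ^ 2 := by
  have hpu : 0 < p + u := by positivity
  -- the minimum is at most the convex combination with weights `p/(p+u)`, `u/(p+u)`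
  have hJ : p / (p + u) * parallelSum s (p + u) ≤ parallelSum s p := by
    rw [parallelSum, parallelSum, div_mul_div_comm,
      div_le_div_iff₀ (by positivity) (by positivity)]
    nlinarith [mul_nonneg (mul_nonneg (mul_nonneg hs hp.le) hpu.le) hu.le]
  have hK : u / (p + u) * parallelSum (p + u) q ≤ parallelSum u q := by
    rw [parallelSum, parallelSum, div_mul_div_comm,
      div_le_div_iff₀ (by positivity) (by positivity)]
    nlinarith [mul_nonneg (mul_nonneg (mul_nonneg hu.le hq) hpu.le) hp.le]
  set m := min (parallelSum s (p + u) * J ^ 2) (parallelSum (p + u) q * K ^ 2)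
  have hm : m = p / (p + u) * m + u / (p + u) * m := by field_simp
  have h₁ : p / (p + u) * m ≤ p / (p + u) * parallelSum s (p + u) * J ^ 2 := by
    rw [mul_assoc]; exact mul_le_mul_of_nonneg_left (min_le_left _ _) (by positivity)
  have h₂ : u / (p + u) * m ≤ u / (p + u) * parallelSum (p + u) q * K ^ 2 := by
    rw [mul_assoc]; exact mul_le_mul_of_nonneg_left (min_le_right _ _) (by positivity)
  linarith [mul_le_mul_of_nonneg_right hJ (sq_nonneg J),
    mul_le_mul_of_nonneg_right hK (sq_nonneg K)]

noncomputable def blockMean {V : Type*} [AddCommGroup V] [Module ℝ V] (f : ℕ → V) (s e : ℕ) :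
    V :=
  ((e - s : ℕ) : ℝ)⁻¹ • ∑ k ∈ Ico s e, f k

noncomputable def blockCost {V : Type*} [SeminormedAddCommGroup V] [Module ℝ V] (f : ℕ → V)
    (s e : ℕ) : ℝ :=
  ∑ k ∈ Ico s e, ‖f k - blockMean f s e‖ ^ 2

lemma blockCost_nonneg {V : Type*} [SeminormedAddCommGroup V] [Module ℝ V] (f : ℕ → V)
    (s e : ℕ) : 0 ≤ blockCost f s e :=
  sum_nonneg fun _ _ => by positivity

lemma sum_sub_blockMean {V : Type*} [AddCommGroup V] [Module ℝ V] (f : ℕ → V) (s e : ℕ) :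
    ∑ k ∈ Ico s e, (f k - blockMean f s e) = 0 := by
  rcases Nat.eq_zero_or_pos (e - s) with h | h
  · simp [Nat.sub_eq_zero_iff_le.mp h]
  · rw [sum_sub_distrib, sum_const, Nat.card_Ico, blockMean, ← Nat.cast_smul_eq_nsmul ℝ,
      smul_smul, mul_inv_cancel₀ (by positivity), one_smul, sub_self]

def IsConstOnBlocks {α : Type*} (f : ℕ → α) (a : ℕ → ℕ) (N : ℕ) : Prop :=
  ∀ ℓ < N, ∀ k ∈ Ico (a ℓ) (a (ℓ + 1)), f k = f (a ℓ)

lemma IsConstOnBlocks.mono {α : Type*} {f : ℕ → α} {a : ℕ → ℕ} {M N : ℕ}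
    (hf : IsConstOnBlocks f a N) (hMN : M ≤ N) : IsConstOnBlocks f a M :=
  fun ℓ hℓ => hf ℓ (hℓ.trans_le hMN)

lemma IsConstOnBlocks.update_last {α : Type*} {f : ℕ → α} {a : ℕ → ℕ} {N c : ℕ}
    (hf : IsConstOnBlocks f a (N + 1)) (hc : c ≤ a (N + 1)) :
    IsConstOnBlocks f (Function.update a (N + 1) c) (N + 1) := by
  intro ℓ hℓ k hk
  rw [Function.update_of_ne (by omega)] at hk ⊢
  refine hf ℓ hℓ k (Ico_subset_Ico_right ?_ hk)
  rcases (Nat.lt_succ_iff.mp hℓ).lt_or_eq with hℓ | rfl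
  · rw [Function.update_of_ne (by omega)]
  · rwa [Function.update_self]

lemma StrictMonoOn.update_last {a : ℕ → ℕ} {N c : ℕ} (ha : StrictMonoOn a (Set.Iic (N + 1)))
    (hc : a N < c) : StrictMonoOn (Function.update a (N + 1) c) (Set.Iic (N + 1)) :=
  strictMonoOn_Iic_of_lt_succ fun m hm => by
    change Function.update a (N + 1) c m < Function.update a (N + 1) c (m + 1)
    rcases (Nat.lt_succ_iff.mp hm).lt_or_eq with hm | rfl
    · rw [Function.update_of_ne (by omega), Function.update_of_ne (by omega)]
      exact ha (Set.mem_Iic.mpr (by omega)) (Set.mem_Iic.mpr (by omega)) (Nat.lt_succ_self m)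
    · rwa [Function.update_of_ne (by omega), Function.update_self]

noncomputable def jumpWeight {V : Type*} [SeminormedAddCommGroup V] (a : ℕ → ℕ) (f : ℕ → V)
    (i : ℕ) : ℝ :=
  parallelSum ((a (i + 1) - a i : ℕ) : ℝ) ((a (i + 2) - a (i + 1) : ℕ) : ℝ)
    * ‖f (a (i + 1)) - f (a i)‖ ^ 2

lemma exists_jumpWeight_le_add_of_update {V : Type*} [SeminormedAddCommGroup V] (f : ℕ → V)
    {a : ℕ → ℕ} {E c : ℕ} {S T : ℝ} (hc₁ : a (E + 1) < c) (hc₂ : c < a (E + 2))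
    (hS : ∃ i ≤ E, jumpWeight (Function.update a (E + 2) c) f i ≤ S)
    (hT : parallelSum ((a (E + 2) - c : ℕ) : ℝ) ((a (E + 3) - a (E + 2) : ℕ) : ℝ)
      * ‖f (a (E + 2)) - f (a (E + 1))‖ ^ 2 ≤ T) (hT₀ : 0 ≤ T) :
    ∃ i ≤ E + 1, jumpWeight a f i ≤ S + T := by
  obtain ⟨i, hi, hw⟩ := hS
  rcases hi.lt_or_eq with hi | rfl
  · refine ⟨i, by omega, ?_⟩
    simp only [jumpWeight, Function.update_of_ne (show i ≠ E + 2 by omega),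
      Function.update_of_ne (show i + 1 ≠ E + 2 by omega),
      Function.update_of_ne (show i + 2 ≠ E + 2 by omega)] at hw
    exact hw.trans (le_add_of_nonneg_right hT₀)
  · simp only [jumpWeight, Function.update_of_ne (show i ≠ i + 2 by omega),
      Function.update_of_ne (show i + 1 ≠ i + 2 by omega), Function.update_self] at hw
    have hpu : ((c - a (i + 1) : ℕ) : ℝ) + ((a (i + 2) - c : ℕ) : ℝ)
        = ((a (i + 2) - a (i + 1) : ℕ) : ℝ) := by
      rw [← Nat.cast_add]; congr 1; omega
    have key := min_parallelSum_le (J := ‖f (a (i + 1)) - f (a i)‖)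
      (K := ‖f (a (i + 2)) - f (a (i + 1))‖) (Nat.cast_nonneg (a (i + 1) - a i))
      (Nat.cast_pos.mpr (Nat.sub_pos_of_lt hc₁)) (Nat.cast_pos.mpr (Nat.sub_pos_of_lt hc₂))
      (Nat.cast_nonneg (a (i + 3) - a (i + 2)))
    rw [hpu] at key
    rcases min_le_iff.mp key with h | h
    · exact ⟨i, by omega, h.trans (by linarith)⟩
    · exact ⟨i + 1, le_rfl, h.trans (by linarith)⟩

section InnerProductSpace

variable {H : Type*} [NormedAddCommGroup H] [InnerProductSpace ℝ H]

lemma blockCost_le_sum_norm_sub_sq (f : ℕ → H) (s e : ℕ) (c : H) :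
    blockCost f s e ≤ ∑ k ∈ Ico s e, ‖f k - c‖ ^ 2 := by
  set m := blockMean f s e
  have hsplit : ∀ k, ‖f k - c‖ ^ 2
      = ‖f k - m‖ ^ 2 + 2 * inner ℝ (f k - m) (m - c) + ‖m - c‖ ^ 2 := fun k => by
    rw [← norm_add_sq_real, sub_add_sub_cancel]
  have hcross : ∑ k ∈ Ico s e, 2 * inner ℝ (f k - m) (m - c) = 0 := by
    rw [← mul_sum, ← sum_inner, sum_sub_blockMean, inner_zero_left, mul_zero]
  simp only [hsplit, sum_add_distrib, hcross, add_zero]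
  exact le_add_of_nonneg_right (sum_nonneg fun _ _ => by positivity)

lemma blockCost_add_blockCost_le (f : ℕ → H) {s m e : ℕ} (hsm : s ≤ m) (hme : m ≤ e) :
    blockCost f s m + blockCost f m e ≤ blockCost f s e :=
  calc blockCost f s m + blockCost f m e
      ≤ ∑ k ∈ Ico s m, ‖f k - blockMean f s e‖ ^ 2
          + ∑ k ∈ Ico m e, ‖f k - blockMean f s e‖ ^ 2 :=
        add_le_add (blockCost_le_sum_norm_sub_sq f s m _) (blockCost_le_sum_norm_sub_sq f m e _)
    _ = blockCost f s e := sum_Ico_consecutive _ hsm hme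

lemma blockCost_mono (f : ℕ → H) {s s' e' e : ℕ} (hs : s ≤ s') (hs' : s' ≤ e') (he : e' ≤ e) :
    blockCost f s' e' ≤ blockCost f s e :=
  calc blockCost f s' e'
      ≤ blockCost f s s' + blockCost f s' e' := le_add_of_nonneg_left (blockCost_nonneg f s s')
    _ ≤ blockCost f s e' := blockCost_add_blockCost_le f hs hs'
    _ ≤ blockCost f s e' + blockCost f e' e := le_add_of_nonneg_right (blockCost_nonneg f e' e)
    _ ≤ blockCost f s e := blockCost_add_blockCost_le f (hs.trans hs') he

lemma blockCost_min_min_le (f : ℕ → H) {s e : ℕ} (c : ℕ) (hse : s ≤ e) :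
    blockCost f (min s c) (min e c) ≤ blockCost f s e := by
  rcases le_total s c with hsc | hcs
  · rw [min_eq_left hsc]
    exact blockCost_mono f le_rfl (le_min hse hsc) (min_le_left e c)
  · rw [min_eq_right hcs, min_eq_right (hcs.trans hse)]
    simpa [blockCost] using blockCost_nonneg f s e

lemma parallelSum_mul_sq_le_blockCost (f : ℕ → H) {s m e : ℕ} (hsm : s < m) (hme : m < e)
    {x y : H} (hx : ∀ k ∈ Ico s m, f k = x) (hy : ∀ k ∈ Ico m e, f k = y) :
    parallelSum ((m - s : ℕ) : ℝ) ((e - m : ℕ) : ℝ) * ‖y - x‖ ^ 2 ≤ blockCost f s e := by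
  set c := blockMean f s e
  have hxc : ∑ k ∈ Ico s m, ‖f k - c‖ ^ 2 = ((m - s : ℕ) : ℝ) * ‖x - c‖ ^ 2 := by
    rw [sum_congr rfl fun k hk => by rw [hx k hk], sum_const, Nat.card_Ico, nsmul_eq_mul]
  have hyc : ∑ k ∈ Ico m e, ‖f k - c‖ ^ 2 = ((e - m : ℕ) : ℝ) * ‖y - c‖ ^ 2 := by
    rw [sum_congr rfl fun k hk => by rw [hy k hk], sum_const, Nat.card_Ico, nsmul_eq_mul]
  rw [blockCost, ← sum_Ico_consecutive _ hsm.le hme.le, hxc, hyc]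
  refine parallelSum_mul_sq_le (by simpa using hsm) (by simpa using hme) (norm_nonneg _) ?_
  calc ‖y - x‖ = ‖(y - c) - (x - c)‖ := by rw [sub_sub_sub_cancel_right]
    _ ≤ ‖x - c‖ + ‖y - c‖ := by rw [add_comm]; exact norm_sub_le _ _

lemma jumpWeight_le_blockCost (f : ℕ → H) {a : ℕ → ℕ} {N i s e : ℕ}
    (ha : StrictMonoOn a (Set.Iic N)) (hf : IsConstOnBlocks f a N)
    (hi : i + 2 ≤ N) (hs : s ≤ a i) (he : a (i + 2) ≤ e) :
    jumpWeight a f i ≤ blockCost f s e :=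
  calc jumpWeight a f i ≤ blockCost f (a i) (a (i + 2)) :=
        parallelSum_mul_sq_le_blockCost f (ha (by simp; omega) (by simp; omega) (by omega))
          (ha (by simp; omega) (by simp; omega) (by omega)) (hf i (by omega))
          (hf (i + 1) (by omega))
    _ ≤ blockCost f s e :=
        blockCost_mono f hs (ha.monotoneOn (by simp; omega) (by simp; omega) (by omega)) he

theorem exists_jumpWeight_le_sum_blockCost (f : ℕ → H) (E : ℕ) {a b : ℕ → ℕ} {D : ℕ}
    (ha : StrictMonoOn a (Set.Iic (E + 2))) (hf : IsConstOnBlocks f a (E + 2))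
    (hb : MonotoneOn b (Set.Iic (D + 1))) (h₀ : b 0 = a 0) (hD : b (D + 1) = a (E + 2))
    (hDE : D ≤ E) :
    ∃ i ≤ E, jumpWeight a f i ≤ ∑ j ∈ range (D + 1), blockCost f (b j) (b (j + 1)) := by
  have hmem : ∀ {j N : ℕ}, j ≤ N → j ∈ Set.Iic N := id
  induction E generalizing a b D with
  | zero =>
    obtain rfl : D = 0 := by omega
    rw [sum_range_one]
    exact ⟨0, le_rfl, jumpWeight_le_blockCost f ha hf le_rfl h₀.le hD.ge⟩
  | succ E ih =>
    rw [sum_range_succ]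
    have hsum := sum_nonneg fun j (_ : j ∈ range D) => blockCost_nonneg f (b j) (b (j + 1))
    by_cases h₁ : b D ≤ a (E + 1)
    · exact ⟨E + 1, le_rfl, le_add_of_nonneg_left hsum |>.trans' <|
        jumpWeight_le_blockCost f ha hf le_rfl h₁ hD.ge⟩
    obtain ⟨D, rfl⟩ : ∃ D', D = D' + 1 := Nat.exists_eq_add_one_of_ne_zero fun hD₀ => h₁ <| by
      rw [hD₀, h₀]; exact ha.monotoneOn (hmem (Nat.zero_le _)) (hmem (by omega)) (Nat.zero_le _)
    have hb' : MonotoneOn b (Set.Iic (D + 1)) := hb.mono (Set.Iic_subset_Iic.mpr (by omega))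
    by_cases h₂ : a (E + 2) ≤ b (D + 1)
    · obtain ⟨i, hi, hw⟩ := ih (b := fun j => min (b j) (a (E + 2)))
        (ha.mono (Set.Iic_subset_Iic.mpr (by omega))) (hf.mono (by omega))
        (fun i hi j hj hij => min_le_min_right _ (hb' hi hj hij))
        (by rw [h₀, min_eq_left (ha.monotoneOn (hmem (Nat.zero_le _)) (hmem (by omega))
          (Nat.zero_le _))])
        (min_eq_right h₂) (by omega)
      refine ⟨i, by omega, hw.trans <| le_add_of_le_of_nonneg (sum_le_sum fun j hj => ?_)
        (blockCost_nonneg _ _ _)⟩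
      have hj : j + 1 ≤ D + 1 := by simp at hj; omega
      exact blockCost_min_min_le f _ (hb' (hmem (by omega)) (hmem hj) (Nat.le_succ j))
    · push Not at h₁ h₂
      have hS := ih (D := D) ((ha.mono (Set.Iic_subset_Iic.mpr (by omega))).update_last h₁)
        ((hf.mono (by omega : E + 2 ≤ E + 1 + 2)).update_last h₂.le) hb'
        (by rw [h₀, Function.update_of_ne (by omega)]) (Function.update_self (E + 1 + 1) _ a).symm
        (by omega)
      have hT := parallelSum_mul_sq_le_blockCost f h₂
        (ha (hmem (by omega)) (hmem le_rfl) (by omega))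
        (fun k hk => hf (E + 1) (by omega) k (Ico_subset_Ico_left h₁.le hk)) (hf (E + 2) (by omega))
      exact exists_jumpWeight_le_add_of_update f h₁ h₂ hS (hT.trans_eq (by rw [hD]))
        (blockCost_nonneg _ _ _)

end InnerProductSpace

lemma Finset.sum_Ico_eq_sum_range_sum_Ico {M : Type*} [AddCommMonoid M] (g : ℕ → M)
    {t : ℕ → ℕ} {D : ℕ} (ht : MonotoneOn t (Set.Iic D)) :
    ∑ k ∈ Ico (t 0) (t D), g k = ∑ ℓ ∈ range D, ∑ k ∈ Ico (t ℓ) (t (ℓ + 1)), g k := by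
  induction D with
  | zero => simp
  | succ D ih =>
    have hmem : ∀ {j}, j ≤ D + 1 → j ∈ Set.Iic (D + 1) := id
    rw [sum_range_succ, ← ih (ht.mono (Set.Iic_subset_Iic.mpr (Nat.le_succ D))),
      sum_Ico_consecutive _ (ht (hmem (Nat.zero_le _)) (hmem (Nat.le_succ D)) (Nat.zero_le _))
        (ht (hmem (Nat.le_succ D)) (hmem le_rfl) (Nat.le_succ D))]

namespace Seg

variable {n : ℕ}

lemma strictMonoOn_t (τ : Seg n) : StrictMonoOn τ.t (Set.Iic τ.D) :=
  strictMonoOn_Iic_of_lt_succ τ.hmono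

lemma t_le (τ : Seg n) {ℓ : ℕ} (hℓ : ℓ ≤ τ.D) : τ.t ℓ ≤ n :=
  (τ.strictMonoOn_t.monotoneOn hℓ (Set.mem_Iic.mpr le_rfl) hℓ).trans_eq τ.hn

lemma t_lt (τ : Seg n) {ℓ : ℕ} (hℓ : ℓ < τ.D) : τ.t ℓ < n :=
  (τ.hmono ℓ hℓ).trans_le (τ.t_le hℓ)

lemma mem_seg (τ : Seg n) {ℓ : ℕ} {j : Fin n} :
    j ∈ τ.seg ℓ ↔ τ.t ℓ ≤ j ∧ (j : ℕ) < τ.t (ℓ + 1) := by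
  simp [seg]

lemma map_valEmbedding_seg (τ : Seg n) {ℓ : ℕ} (hℓ : ℓ < τ.D) :
    (τ.seg ℓ).map Fin.valEmbedding = Ico (τ.t ℓ) (τ.t (ℓ + 1)) := by
  ext k
  simp only [seg, mem_map, mem_filter, mem_univ, true_and, Fin.valEmbedding_apply, mem_Ico]
  constructor
  · rintro ⟨j, hj, rfl⟩
    exact hj
  · intro hk
    exact ⟨⟨k, hk.2.trans_le (τ.t_le hℓ)⟩, hk, rfl⟩

lemma card_seg (τ : Seg n) {ℓ : ℕ} (hℓ : ℓ < τ.D) : (τ.seg ℓ).card = τ.t (ℓ + 1) - τ.t ℓ := by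
  rw [← card_map Fin.valEmbedding, τ.map_valEmbedding_seg hℓ, Nat.card_Ico]

lemma sum_seg {M : Type*} [AddCommMonoid M] (τ : Seg n) {ℓ : ℕ} (hℓ : ℓ < τ.D) (g : ℕ → M) :
    ∑ j ∈ τ.seg ℓ, g j = ∑ k ∈ Ico (τ.t ℓ) (τ.t (ℓ + 1)), g k := by
  rw [← τ.map_valEmbedding_seg hℓ, sum_map]
  rfl

lemma segVal_eq_extend {H : Type*} [AddCommGroup H] (τ : Seg n) (m : Fin n → H) {ℓ : ℕ}
    (hℓ : ℓ < τ.D) : segVal τ m ℓ = Function.extend Fin.val m 0 (τ.t ℓ) := by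
  rw [segVal, dif_pos (τ.t_lt hℓ)]
  exact (Fin.val_injective.extend_apply m 0 ⟨_, τ.t_lt hℓ⟩).symm

lemma proj_apply_of_mem {H : Type*} [AddCommGroup H] [Module ℝ H] (τ : Seg n) (μ : Fin n → H)
    {ℓ : ℕ} (hℓ : ℓ < τ.D) {i : Fin n} (hi : τ.t ℓ ≤ i ∧ (i : ℕ) < τ.t (ℓ + 1)) :
    proj τ μ i = blockMean (Function.extend Fin.val μ 0) (τ.t ℓ) (τ.t (ℓ + 1)) := by
  have hmono := τ.strictMonoOn_t.monotoneOn
  have hunique : ∀ ℓ' ∈ range τ.D, ℓ' ≠ ℓ → ¬ (τ.t ℓ' ≤ i ∧ (i : ℕ) < τ.t (ℓ' + 1)) := by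
    rintro ℓ' hℓ' hne ⟨h₁, h₂⟩
    rw [mem_range] at hℓ'
    rcases hne.lt_or_gt with h | h
    · have := hmono (Set.mem_Iic.mpr (by omega)) (Set.mem_Iic.mpr hℓ.le)
        (show ℓ' + 1 ≤ ℓ by omega)
      omega
    · have := hmono (Set.mem_Iic.mpr (by omega)) (Set.mem_Iic.mpr hℓ'.le)
        (show ℓ + 1 ≤ ℓ' by omega)
      omega
  rw [proj, sum_eq_single_of_mem ℓ (mem_range.mpr hℓ)
      fun ℓ' hℓ' hne => if_neg (hunique ℓ' hℓ' hne),
    if_pos hi, blockMean, ← τ.sum_seg hℓ]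
  simp only [Fin.val_injective.extend_apply]

lemma hnorm2_sub_proj {H : Type*} [NormedAddCommGroup H] [Module ℝ H] (τ : Seg n)
    (μ : Fin n → H) :
    hnorm2 (fun i => μ i - proj τ μ i)
      = ∑ ℓ ∈ range τ.D, blockCost (Function.extend Fin.val μ 0) (τ.t ℓ) (τ.t (ℓ + 1)) := by
  set F := Function.extend Fin.val μ 0
  set P := Function.extend Fin.val (proj τ μ) 0
  calc hnorm2 (fun i => μ i - proj τ μ i)
      = ∑ k ∈ Ico (τ.t 0) (τ.t τ.D), ‖F k - P k‖ ^ 2 := by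
        simp only [hnorm2, τ.h0, τ.hn, ← range_eq_Ico, sum_range, F, P,
          Fin.val_injective.extend_apply]
    _ = ∑ ℓ ∈ range τ.D, ∑ k ∈ Ico (τ.t ℓ) (τ.t (ℓ + 1)), ‖F k - P k‖ ^ 2 :=
        sum_Ico_eq_sum_range_sum_Ico _ τ.strictMonoOn_t.monotoneOn
    _ = _ := sum_congr rfl fun ℓ hℓ => sum_congr rfl fun k hk => by
        rw [mem_range] at hℓ
        rw [mem_Ico] at hk
        have hk' : k < n := hk.2.trans_le (τ.t_le hℓ)
        rw [show P k = proj τ μ ⟨k, hk'⟩ from Fin.val_injective.extend_apply _ 0 ⟨k, hk'⟩,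
          τ.proj_apply_of_mem μ hℓ hk]

end Seg

lemma IsTrueSeg.isConstOnBlocks_extend {n : ℕ} {H : Type*} [Zero H] {τ : Seg n}
    {m : Fin n → H} (h : IsTrueSeg τ m) :
    IsConstOnBlocks (Function.extend Fin.val m 0) τ.t τ.D := by
  intro ℓ hℓ k hk
  have hk' : k < n := (mem_Ico.mp hk).2.trans_le (τ.t_le hℓ)
  rw [show k = ((⟨k, hk'⟩ : Fin n) : ℕ) from rfl,
    show τ.t ℓ = ((⟨τ.t ℓ, τ.t_lt hℓ⟩ : Fin n) : ℕ) from rfl,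
    Fin.val_injective.extend_apply, Fin.val_injective.extend_apply]
  exact h.1 ℓ hℓ _ (τ.mem_seg.mpr (mem_Ico.mp hk)) _ (τ.mem_seg.mpr ⟨le_rfl, τ.hmono ℓ hℓ⟩)

/-- Stronger form of Lemma 5.2: for any `τ` with `D_τ < D_{τ*}`,
`‖μ* − Π_τ μ*‖² ≥ min_{1 ≤ i ≤ D_{τ*}−1} (|λ*_i||λ*_{i+1}| / (|λ*_i| + |λ*_{i+1}|))
· ‖μ*_{λ*_{i+1}} − μ*_{λ*_i}‖²`. -/
theorem approx_error_lower_bound_strong {H : Type*}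
    [NormedAddCommGroup H] [InnerProductSpace ℝ H]
    {n : ℕ} (μs : Fin n → H) (τs : Seg n) (hτs : IsTrueSeg τs μs) (hDs : 2 ≤ τs.D)
    (τ : Seg n) (hτ : τ.D < τs.D) :
    hnorm2 (fun i => μs i - Seg.proj τ μs i)
      ≥ (Finset.range (τs.D - 1)).inf' (Finset.nonempty_range_iff.mpr (by omega))
          fun ℓ =>
            ((τs.seg ℓ).card : ℝ) * ((τs.seg (ℓ + 1)).card : ℝ)
                / (((τs.seg ℓ).card : ℝ) + ((τs.seg (ℓ + 1)).card : ℝ))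
              * ‖segVal τs μs (ℓ + 1) - segVal τs μs ℓ‖ ^ 2 := by
  obtain ⟨E, hE⟩ : ∃ E, τs.D = E + 2 := ⟨τs.D - 2, by omega⟩
  obtain ⟨D, hD⟩ : ∃ D, τ.D = D + 1 := ⟨τ.D - 1, by have := τ.hD; omega⟩
  obtain ⟨i, hi, hw⟩ := exists_jumpWeight_le_sum_blockCost (Function.extend Fin.val μs 0) E
    (τs.strictMonoOn_t.mono (Set.Iic_subset_Iic.mpr hE.ge)) (hτs.isConstOnBlocks_extend.mono hE.ge)
    (τ.strictMonoOn_t.monotoneOn.mono (Set.Iic_subset_Iic.mpr hD.ge)) (τ.h0.trans τs.h0.symm)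
    (by rw [← hD, τ.hn, ← hE, τs.hn]) (by omega)
  rw [ge_iff_le, Seg.hnorm2_sub_proj, hD]
  refine (inf'_le _ (mem_range.mpr (show i < τs.D - 1 by omega))).trans (le_of_eq_of_le ?_ hw)
  rw [τs.card_seg (by omega), τs.card_seg (by omega), τs.segVal_eq_extend μs (by omega),
    τs.segVal_eq_extend μs (by omega)]
  rfl
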